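/- (Differentiation commutes with ideal membership up to radical) Let R be a differential polynomial ring in variables y_{i,α} (i = 1,…,n, α ∈ ℕ₀^m) with commuting derivations ∂/∂x₁,…,∂/∂xₘ given by ∂y_{i,α}/∂x_j = y_{i,α+e_j}. Let g ∈ R, ε ∈ ℕ, and α ∈ ℕ₀^m. Then there exist a positive integer c and an element G of the ideal generated by the partial derivatives ∂^{|β|}g/∂x^β for β ≺ α (graded lexicographic order on ℕ₀^m) such that ∂^{ε|α|}(g^ε)/∂x^{εα} = c · (∂^{|α|}g/∂x^α)^ε + G. -/

import Mathlib

open MvPolynomial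

/-- The differential polynomial ring `ℂ{y} = ℂ[y_{i,α} : i = 1,…,n, α ∈ ℕ₀^m]`. -/
abbrev DiffPolyRing (n m : ℕ) := MvPolynomial (Fin n × (Fin m → ℕ)) ℂ

/-- The derivation `∂/∂x_j` on `ℂ{y}`, determined by `∂ y_{i,α} / ∂x_j = y_{i,α+e_j}`. -/
noncomputable def derX {n m : ℕ} (j : Fin m) : DiffPolyRing n m → DiffPolyRing n m :=
  fun g => MvPolynomial.mkDerivation ℂ
    (fun v : Fin n × (Fin m → ℕ) => (X (v.1, v.2 + Pi.single j 1) : DiffPolyRing n m)) g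

/-- The iterated partial derivative `∂^{|α|}/∂x^α = ∂^{α₁}/∂x₁^{α₁} ∘ ⋯ ∘ ∂^{αₘ}/∂xₘ^{αₘ}`. -/
noncomputable def derXpow {n m : ℕ} (α : Fin m → ℕ) : DiffPolyRing n m → DiffPolyRing n m :=
  fun g => (List.finRange m).foldr (fun j h => (derX j)^[α j] h) g

/-- The graded lexicographic order on multi-indices `ℕ₀^m`. -/
def GradedLexLT {m : ℕ} (β α : Fin m → ℕ) : Prop :=
  (∑ j, β j) < (∑ j, α j) ∨
    ((∑ j, β j) = (∑ j, α j) ∧ ∃ j : Fin m, (∀ k < j, β k = α k) ∧ β j < α j)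

namespace GLT
variable {m : ℕ}

lemma irrefl (α : Fin m → ℕ) : ¬ GradedLexLT α α := by
  rintro (h | ⟨-, j, -, hj⟩)
  · exact lt_irrefl _ h
  · exact lt_irrefl _ hj

lemma trans {a b c : Fin m → ℕ} (h1 : GradedLexLT a b) (h2 : GradedLexLT b c) :
    GradedLexLT a c := by
  rcases h1 with h1 | ⟨e1, j1, hj1, hlt1⟩
  · rcases h2 with h2 | ⟨e2, -⟩
    · exact Or.inl (h1.trans h2)
    · exact Or.inl (e2 ▸ h1)
  · rcases h2 with h2 | ⟨e2, j2, hj2, hlt2⟩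
    · exact Or.inl (e1 ▸ h2)
    · refine Or.inr ⟨e1.trans e2, ?_⟩
      rcases lt_trichotomy j1 j2 with h | h | h
      · exact ⟨j1, fun k hk => (hj1 k hk).trans (hj2 k (hk.trans h)), hlt1.trans_le
          ((hj2 j1 h).le)⟩
      · subst h
        exact ⟨j1, fun k hk => (hj1 k hk).trans (hj2 k hk), hlt1.trans hlt2⟩
      · exact ⟨j2, fun k hk => (hj1 k (hk.trans h)).trans (hj2 k hk),
          (hj1 j2 h) ▸ hlt2⟩

lemma trichotomy (β α : Fin m → ℕ) : GradedLexLT β α ∨ β = α ∨ GradedLexLT α β := by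
  rcases lt_trichotomy (∑ j, β j) (∑ j, α j) with h | h | h
  · exact Or.inl (Or.inl h)
  · by_cases heq : β = α
    · exact Or.inr (Or.inl heq)
    · have hne : ∃ j, β j ≠ α j := by
        by_contra hno
        push_neg at hno
        exact heq (funext hno)
      classical
      have hnonempty : (Finset.univ.filter (fun j => β j ≠ α j)).Nonempty := by
        obtain ⟨j, hj⟩ := hne
        exact ⟨j, Finset.mem_filter.mpr ⟨Finset.mem_univ j, hj⟩⟩
      set j0 := (Finset.univ.filter (fun j => β j ≠ α j)).min' hnonempty with hj0
      have hj0mem : β j0 ≠ α j0 := by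
        have := (Finset.univ.filter (fun j => β j ≠ α j)).min'_mem hnonempty
        exact (Finset.mem_filter.mp this).2
      have hbefore : ∀ k < j0, β k = α k := by
        intro k hk
        by_contra hkne
        have : j0 ≤ k := Finset.min'_le _ k (Finset.mem_filter.mpr ⟨Finset.mem_univ k, hkne⟩)
        exact absurd hk (not_lt.mpr this)
      rcases lt_or_gt_of_ne hj0mem with hlt | hgt
      · exact Or.inl (Or.inr ⟨h, j0, hbefore, hlt⟩)
      · exact Or.inr (Or.inr (Or.inr ⟨h.symm, j0, fun k hk => (hbefore k hk).symm, hgt⟩))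
  · exact Or.inr (Or.inr (Or.inl h))

lemma add_right {β α : Fin m → ℕ} (h : GradedLexLT β α) (γ : Fin m → ℕ) :
    GradedLexLT (β + γ) (α + γ) := by
  have hsum : ∀ δ : Fin m → ℕ, (∑ j, (δ + γ : Fin m → ℕ) j) = (∑ j, δ j) + ∑ j, γ j := by
    intro δ; rw [← Finset.sum_add_distrib]; rfl
  rcases h with h | ⟨e, j, hj, hlt⟩
  · exact Or.inl (by rw [hsum, hsum]; omega)
  · refine Or.inr ⟨by rw [hsum, hsum, e], j, fun k hk => ?_, ?_⟩
    · simp [Pi.add_apply, hj k hk]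
    · simp only [Pi.add_apply]; omega

lemma add_left {β α : Fin m → ℕ} (h : GradedLexLT β α) (γ : Fin m → ℕ) :
    GradedLexLT (γ + β) (γ + α) := by
  rw [add_comm γ β, add_comm γ α]; exact add_right h γ

lemma of_add_right {β α γ : Fin m → ℕ} (h : GradedLexLT (β + γ) (α + γ)) :
    GradedLexLT β α := by
  rcases trichotomy β α with h1 | rfl | h1
  · exact h1
  · exact absurd h (irrefl _)
  · exact absurd (trans h (add_right h1 γ)) (irrefl _)

end GLT

namespace DPR

variable {n m : ℕ}

noncomputable def D (j : Fin m) : Derivation ℂ (DiffPolyRing n m) (DiffPolyRing n m) :=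
  MvPolynomial.mkDerivation ℂ
    (fun v : Fin n × (Fin m → ℕ) => (X (v.1, v.2 + Pi.single j 1) : DiffPolyRing n m))

lemma derX_eq (j : Fin m) : (derX j : DiffPolyRing n m → DiffPolyRing n m) = ⇑(D (n := n) j) := rfl

lemma derX_comm (j k : Fin m) (g : DiffPolyRing n m) :
    derX j (derX k g) = derX k (derX j g) := by
  have h : (⁅D (n := n) j, D k⁆ : Derivation ℂ (DiffPolyRing n m) (DiffPolyRing n m)) = 0 := by
    apply MvPolynomial.derivation_ext
    intro i
    simp only [Derivation.commutator_apply, Derivation.zero_apply, D, mkDerivation_X,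
      add_right_comm, sub_self]
  have := congrArg (fun d : Derivation ℂ (DiffPolyRing n m) (DiffPolyRing n m) => d g) h
  simp only [Derivation.commutator_apply, Derivation.zero_apply, sub_eq_zero] at this
  exact this
lemma commute_derX (j k : Fin m) :
    Function.Commute (derX (n := n) j) (derX k) := fun g => derX_comm j k g

noncomputable def foldD (L : List (Fin m)) (α : Fin m → ℕ) (g : DiffPolyRing n m) :
    DiffPolyRing n m :=
  L.foldr (fun j h => (derX j)^[α j] h) g

lemma derXpow_eq_foldD (α : Fin m → ℕ) (g : DiffPolyRing n m) :
    derXpow α g = foldD (List.finRange m) α g := rfl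

@[simp] lemma foldD_nil (α : Fin m → ℕ) (g : DiffPolyRing n m) : foldD [] α g = g := rfl

@[simp] lemma foldD_cons (j : Fin m) (L : List (Fin m)) (α : Fin m → ℕ) (g : DiffPolyRing n m) :
    foldD (j :: L) α g = (derX j)^[α j] (foldD L α g) := rfl

lemma foldD_congr (L : List (Fin m)) {α β : Fin m → ℕ} (h : ∀ j ∈ L, α j = β j)
    (g : DiffPolyRing n m) : foldD L α g = foldD L β g := by
  induction L with
  | nil => rfl
  | cons k L ih =>
    simp only [foldD_cons, h k (by simp), ih (fun j hj => h j (by simp [hj]))]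

lemma derX_foldD (j : Fin m) (L : List (Fin m)) (α : Fin m → ℕ) (g : DiffPolyRing n m) :
    derX j (foldD L α g) = foldD L α (derX j g) := by
  induction L generalizing g with
  | nil => rfl
  | cons k L ih =>
    simp only [foldD_cons]
    rw [((commute_derX j k).iterate_right (α k)) (foldD L α g), ih g]

lemma foldD_single (j : Fin m) (L : List (Fin m)) (hL : L.Nodup) (hj : j ∈ L)
    (α : Fin m → ℕ) (g : DiffPolyRing n m) :
    foldD L (α + Pi.single j 1) g = derX j (foldD L α g) := by
  induction L generalizing g with
  | nil => simp at hj
  | cons k L ih =>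
    rcases List.nodup_cons.mp hL with ⟨hkL, hLnd⟩
    by_cases hjk : j = k
    · subst hjk
      have hjnL : ∀ l ∈ L, ((α + Pi.single j 1 : Fin m → ℕ)) l = α l := by
        intro l hl
        have hne : l ≠ j := fun h => hkL (h ▸ hl)
        simp [Pi.add_apply, Pi.single_eq_of_ne hne]
      simp only [foldD_cons, Pi.add_apply, Pi.single_eq_same]
      rw [foldD_congr L hjnL, Function.iterate_succ_apply']
    · have hjL : j ∈ L := by
        rcases List.mem_cons.mp hj with h | h
        · exact absurd h hjk
        · exact h
      simp only [foldD_cons, Pi.add_apply, Pi.single_eq_of_ne (Ne.symm hjk), add_zero]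
      rw [ih hLnd hjL g, ← ((commute_derX j k).iterate_right (α k)) (foldD L α g)]

lemma derXpow_single (j : Fin m) (α : Fin m → ℕ) (g : DiffPolyRing n m) :
    derXpow (α + Pi.single j 1) g = derX j (derXpow α g) := by
  rw [derXpow_eq_foldD, derXpow_eq_foldD, foldD_single j _ (List.nodup_finRange m)
    (List.mem_finRange j)]

lemma derXpow_add_single (j : Fin m) (c : ℕ) (α : Fin m → ℕ) (g : DiffPolyRing n m) :
    derXpow (α + c • Pi.single j 1) g = (derX j)^[c] (derXpow α g) := by
  induction c with
  | zero => simp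
  | succ c ih =>
    have : α + (c + 1) • Pi.single j 1 = (α + c • Pi.single j 1) + Pi.single j 1 := by
      rw [succ_nsmul, ← add_assoc]
    rw [this, derXpow_single, ih, Function.iterate_succ_apply']

lemma derXpow_zero (g : DiffPolyRing n m) : derXpow (0 : Fin m → ℕ) g = g := by
  show (List.finRange m).foldr (fun j h => (derX j)^[(0 : Fin m → ℕ) j] h) g = g
  induction (List.finRange m) with
  | nil => rfl
  | cons k L ih => simp [ih]

noncomputable def derXpowL (α : Fin m → ℕ) : Module.End ℂ (DiffPolyRing n m) :=
  (List.finRange m).foldr (fun j e => ((D (n := n) j).toLinearMap ^ (α j)) * e) 1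

lemma derXpow_eq_L (α : Fin m → ℕ) (g : DiffPolyRing n m) :
    derXpow α g = derXpowL α g := by
  show (List.finRange m).foldr (fun j h => (derX j)^[α j] h) g = derXpowL α g
  rw [derXpowL]
  induction (List.finRange m) generalizing g with
  | nil => rfl
  | cons k L ih =>
    simp only [List.foldr_cons, Module.End.mul_apply, ← ih, Module.End.pow_apply]
    rfl

lemma derXpow_sum {ι : Type*} (s : Finset ι) (α : Fin m → ℕ) (f : ι → DiffPolyRing n m) :
    derXpow α (∑ i ∈ s, f i) = ∑ i ∈ s, derXpow α (f i) := by
  simp only [derXpow_eq_L, map_sum]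

lemma derXpow_nsmul (α : Fin m → ℕ) (c : ℕ) (x : DiffPolyRing n m) :
    derXpow α (c • x) = c • derXpow α x := by
  simp only [derXpow_eq_L, map_nsmul]

lemma derX_iterate_mul (j : Fin m) (k : ℕ) (a b : DiffPolyRing n m) :
    (derX j)^[k] (a * b) =
      ∑ i ∈ Finset.range (k + 1),
        k.choose i • ((derX j)^[k - i] a * (derX j)^[i] b) := by
  have hadd : ∀ x y : DiffPolyRing n m, derX j (x + y) = derX j x + derX j y := by
    intro x y; rw [derX_eq]; exact map_add _ x y
  have hsum : ∀ (s : Finset ℕ) (f : ℕ → DiffPolyRing n m),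
      derX j (∑ i ∈ s, f i) = ∑ i ∈ s, derX j (f i) := by
    intro s f; rw [derX_eq]; exact map_sum _ f s
  have hsmul : ∀ (c : ℕ) (x : DiffPolyRing n m), derX j (c • x) = c • derX j x := by
    intro c x; rw [derX_eq]; exact map_nsmul _ c x
  have hmul : ∀ x y : DiffPolyRing n m, derX j (x * y) = derX j x * y + x * derX j y := by
    intro x y; rw [derX_eq, Derivation.leibniz]
    simp only [smul_eq_mul]; ring
  induction k with
  | zero => simp
  | succ k IH =>
    calc
      (derX j)^[k + 1] (a * b) =
          derX j (∑ i ∈ Finset.range (k + 1),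
              k.choose i • ((derX j)^[k - i] a * (derX j)^[i] b)) := by
        rw [Function.iterate_succ_apply', IH]
      _ = (∑ i ∈ Finset.range (k + 1),
            k.choose i • ((derX j)^[k - i + 1] a * (derX j)^[i] b)) +
          ∑ i ∈ Finset.range (k + 1),
            k.choose i • ((derX j)^[k - i] a * (derX j)^[i + 1] b) := by
        rw [hsum]
        simp_rw [hsmul, hmul, ← Function.iterate_succ_apply' (derX j), smul_add,
          Finset.sum_add_distrib]
      _ = (∑ i ∈ Finset.range (k + 1),
                k.choose i.succ • ((derX j)^[k - i] a * (derX j)^[i + 1] b)) +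
              1 • ((derX j)^[k + 1] a * (derX j)^[0] b) +
            ∑ i ∈ Finset.range (k + 1),
              k.choose i • ((derX j)^[k - i] a * (derX j)^[i + 1] b) := ?_
      _ = ((∑ i ∈ Finset.range (k + 1),
              k.choose i • ((derX j)^[k - i] a * (derX j)^[i + 1] b)) +
              ∑ i ∈ Finset.range (k + 1),
                k.choose i.succ • ((derX j)^[k - i] a * (derX j)^[i + 1] b)) +
            1 • ((derX j)^[k + 1] a * (derX j)^[0] b) := by
        rw [add_comm, add_assoc]
      _ = (∑ i ∈ Finset.range (k + 1),
              (k + 1).choose (i + 1) • ((derX j)^[k + 1 - (i + 1)] a * (derX j)^[i + 1] b)) +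
            1 • ((derX j)^[k + 1] a * (derX j)^[0] b) := by
        simp_rw [Nat.choose_succ_succ, Nat.succ_sub_succ, add_smul, Finset.sum_add_distrib]
      _ = ∑ i ∈ Finset.range (k + 2),
            (k + 1).choose i • ((derX j)^[k + 1 - i] a * (derX j)^[i] b) := by
        rw [Finset.sum_range_succ' _ (k + 1), Nat.choose_zero_right, tsub_zero]
    congr 1
    refine (Finset.sum_range_succ' _ _).trans (congr_arg₂ (· + ·) ?_ ?_)
    · rw [Finset.sum_range_succ, Nat.choose_succ_self, zero_smul, add_zero]
      refine Finset.sum_congr rfl fun i hi => ?_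
      rw [Finset.mem_range] at hi
      have h' : k - (i + 1) + 1 = k - i := by omega
      rw [h']
    · rw [Nat.choose_zero_right, tsub_zero]
lemma iter_eq (k : Fin m) (c : ℕ) (x : DiffPolyRing n m) :
    (derX k)^[c] x = derXpow (c • Pi.single k 1) x := by
  rw [← zero_add (c • Pi.single k 1), derXpow_add_single, derXpow_zero]

lemma iter_sum {ι : Type} (k : Fin m) (c : ℕ) (s : Finset ι) (f : ι → DiffPolyRing n m) :
    (derX k)^[c] (∑ i ∈ s, f i) = ∑ i ∈ s, (derX k)^[c] (f i) := by
  simp only [iter_eq, derXpow_sum]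

lemma iter_nsmul (k : Fin m) (c d : ℕ) (x : DiffPolyRing n m) :
    (derX k)^[c] (d • x) = d • (derX k)^[c] x := by
  simp only [iter_eq, derXpow_nsmul]

lemma derXpow_mul_aux (L : List (Fin m)) (γ : Fin m → ℕ) (hγ : ∀ j ∉ L, γ j = 0)
    (a b : DiffPolyRing n m) :
    derXpow γ (a * b) = ∑ δ ∈ Finset.Iic γ,
      (∏ j, (γ j).choose (δ j)) • (derXpow δ a * derXpow (γ - δ) b) := by
  induction L generalizing γ a b with
  | nil =>
    have h0 : γ = 0 := funext fun j => hγ j List.not_mem_nil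
    subst h0
    have hIic : (Finset.Iic (0 : Fin m → ℕ)) = {0} := by
      ext δ
      simp [Finset.mem_Iic, nonpos_iff_eq_zero]
    rw [hIic, Finset.sum_singleton]
    simp [derXpow_zero]
  | cons k L ih =>
    set c := γ k with hc
    set γ' := Function.update γ k 0 with hγ'
    have hsupp' : ∀ j ∉ L, γ' j = 0 := by
      intro j hj
      by_cases hjk : j = k
      · subst hjk; simp [hγ']
      · have : j ∉ k :: L := by simp [hjk, hj]
        simp [hγ', Function.update_of_ne hjk, hγ j this]
    have hγk : γ' k = 0 := by simp [hγ']
    have hγoff : ∀ l, l ≠ k → γ' l = γ l := by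
      intro l hlk; simp [hγ', Function.update_of_ne hlk]
    have hγeq : γ = γ' + c • Pi.single k 1 := by
      funext l
      by_cases hlk : l = k
      · subst hlk; simp [hγ', hc]
      · simp [hγ', Function.update_of_ne hlk, Pi.single_eq_of_ne hlk]
    have hD : ∀ x : DiffPolyRing n m, derXpow γ x = (derX k)^[c] (derXpow γ' x) := by
      intro x
      conv_lhs => rw [hγeq]
      rw [derXpow_add_single]
    -- abbreviate the summand
    set F : (Fin m → ℕ) → DiffPolyRing n m :=
      fun η => (∏ j, (γ j).choose (η j)) • (derXpow η a * derXpow (γ - η) b) with hF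
    have hterm : ∀ δ ∈ Finset.Iic γ', ∀ i ∈ Finset.range (c + 1),
        ((∏ j, (γ' j).choose (δ j)) * c.choose i) •
          ((derX k)^[c - i] (derXpow δ a) * (derX k)^[i] (derXpow (γ' - δ) b)) =
        F (δ + (c - i) • Pi.single k 1) := by
      intro δ hδ i hi
      have hδle : δ ≤ γ' := Finset.mem_Iic.mp hδ
      have hδk : δ k = 0 := Nat.le_zero.mp (hγk ▸ hδle k)
      have hic : i ≤ c := Nat.lt_succ_iff.mp (Finset.mem_range.mp hi)
      set η : Fin m → ℕ := δ + (c - i) • Pi.single k 1 with hη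
      have hηk : η k = c - i := by simp [hη, hδk]
      have hηoff : ∀ l, l ≠ k → η l = δ l := by
        intro l hlk; simp [hη, Pi.single_eq_of_ne hlk]
      have hγkc : γ k = c := hc.symm
      rw [hF]
      congr 1
      · -- coefficients
        have hprod : ∏ l ∈ ({k}ᶜ : Finset (Fin m)), (γ' l).choose (δ l)
            = ∏ l ∈ ({k}ᶜ : Finset (Fin m)), (γ l).choose (η l) := by
          refine Finset.prod_congr rfl fun l hl => ?_
          have hlk : l ≠ k := by simpa using hl
          rw [hγoff l hlk, hηoff l hlk]
        rw [Fintype.prod_eq_mul_prod_compl k (fun j => (γ' j).choose (δ j)),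
          Fintype.prod_eq_mul_prod_compl k (fun j => (γ j).choose (η j)),
          hγk, hδk, Nat.choose_self, one_mul, hηk, hγkc, Nat.choose_symm hic, hprod, mul_comm]
      · -- the derivatives
        congr 1
        · rw [hη, derXpow_add_single]
        · have hsub : γ' - δ + i • Pi.single k 1 = γ - η := by
            funext l
            by_cases hlk : l = k
            · subst hlk
              simp only [Pi.add_apply, Pi.sub_apply, Pi.smul_apply, Pi.single_eq_same,
                smul_eq_mul, mul_one, hγk, hδk, hηk, hγkc, Nat.zero_sub, zero_add]
              omega
            · simp only [Pi.add_apply, Pi.sub_apply, Pi.smul_apply,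
                Pi.single_eq_of_ne hlk, smul_eq_mul, mul_zero, add_zero,
                hγoff l hlk, hηoff l hlk]
          rw [← hsub, derXpow_add_single]
    -- now assemble
    rw [hD, ih γ' hsupp' a b, iter_sum]
    have hstep : ∀ δ ∈ Finset.Iic γ',
        (derX k)^[c] ((∏ j, (γ' j).choose (δ j)) • (derXpow δ a * derXpow (γ' - δ) b)) =
        ∑ i ∈ Finset.range (c + 1), F (δ + (c - i) • Pi.single k 1) := by
      intro δ hδ
      rw [iter_nsmul, derX_iterate_mul, Finset.smul_sum]
      refine Finset.sum_congr rfl fun i hi => ?_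
      rw [smul_smul]
      exact hterm δ hδ i hi
    rw [Finset.sum_congr rfl hstep, ← Finset.sum_product']
    refine Finset.sum_nbij' (i := fun p => p.1 + (c - p.2) • Pi.single k 1)
      (j := fun η => (Function.update η k 0, c - η k)) ?_ ?_ ?_ ?_ ?_
    · intro p hp
      rw [Finset.mem_product] at hp
      obtain ⟨h1, h2⟩ := hp
      rw [Finset.mem_Iic] at h1 ⊢
      rw [Finset.mem_range, Nat.lt_succ_iff] at h2
      intro l
      by_cases hlk : l = k
      · rw [hlk]
        have : p.1 k = 0 := Nat.le_zero.mp (hγk ▸ h1 k)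
        simp only [Pi.add_apply, Pi.smul_apply, Pi.single_eq_same, smul_eq_mul, mul_one, this,
          zero_add, hc.symm]
        omega
      · simp only [Pi.add_apply, Pi.smul_apply, Pi.single_eq_of_ne hlk, smul_eq_mul, mul_zero,
          add_zero]
        exact (hγoff l hlk) ▸ h1 l
    · intro η hη
      rw [Finset.mem_Iic] at hη
      rw [Finset.mem_product, Finset.mem_Iic, Finset.mem_range]
      dsimp only
      constructor
      · intro l
        by_cases hlk : l = k
        · rw [hlk]; simp [hγk]
        · rw [Function.update_of_ne hlk, hγoff l hlk]
          exact hη l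
      · omega
    · intro p hp
      rw [Finset.mem_product] at hp
      obtain ⟨h1, h2⟩ := hp
      rw [Finset.mem_Iic] at h1
      rw [Finset.mem_range, Nat.lt_succ_iff] at h2
      have hp1k : p.1 k = 0 := Nat.le_zero.mp (hγk ▸ h1 k)
      have hkey : (p.1 + (c - p.2) • Pi.single k 1 : Fin m → ℕ) k = c - p.2 := by
        simp [hp1k]
      refine Prod.ext ?_ ?_
      · funext l
        by_cases hlk : l = k
        · rw [hlk]
          simp [Function.update_self, hp1k]
        · simp [Function.update_of_ne hlk, Pi.single_eq_of_ne hlk]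
      · show c - (p.1 + (c - p.2) • Pi.single k 1 : Fin m → ℕ) k = p.2
        rw [hkey]
        omega
    · intro η hη
      dsimp only
      rw [Finset.mem_Iic] at hη
      have hηk : η k ≤ c := hc ▸ hη k
      show (Function.update η k 0 + (c - (c - η k)) • Pi.single k 1 : Fin m → ℕ) = η
      funext l
      by_cases hlk : l = k
      · rw [hlk]
        simp only [Pi.add_apply, Function.update_self, Pi.smul_apply, Pi.single_eq_same,
          smul_eq_mul, mul_one, zero_add]
        omega
      · simp [Function.update_of_ne hlk, Pi.single_eq_of_ne hlk]
    · intro p hp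
      rfl
lemma derXpow_mul (γ : Fin m → ℕ) (a b : DiffPolyRing n m) :
    derXpow γ (a * b) = ∑ δ ∈ Finset.Iic γ,
      (∏ j, (γ j).choose (δ j)) • (derXpow δ a * derXpow (γ - δ) b) :=
  derXpow_mul_aux (List.finRange m) γ (fun j hj => absurd (List.mem_finRange j) hj) a b

/-- The ideal of lower-order derivatives. -/
noncomputable def I (g : DiffPolyRing n m) (α : Fin m → ℕ) : Ideal (DiffPolyRing n m) :=
  Ideal.span {h : DiffPolyRing n m | ∃ β, GradedLexLT β α ∧ h = derXpow β g}

lemma mem_gen (g : DiffPolyRing n m) {α β : Fin m → ℕ} (h : GradedLexLT β α) :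
    derXpow β g ∈ I g α :=
  Ideal.subset_span ⟨β, h, rfl⟩

lemma succ_smul_pi (ε : ℕ) (α : Fin m → ℕ) : (ε + 1) • α = ε • α + α := by
  rw [succ_nsmul]

lemma mem_I_of_lt (g : DiffPolyRing n m) (α : Fin m → ℕ) :
    ∀ ε : ℕ, 1 ≤ ε → ∀ β, GradedLexLT β (ε • α) → derXpow β (g ^ ε) ∈ I g α := by
  intro ε hε
  induction ε, hε using Nat.le_induction with
  | base =>
    intro β hβ
    rw [one_smul] at hβ
    rw [pow_one]
    exact Ideal.subset_span ⟨β, hβ, rfl⟩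
  | succ ε hε ih =>
    intro β hβ
    rw [pow_succ, derXpow_mul]
    apply Ideal.sum_mem
    intro δ hδ
    have hδle : δ ≤ β := Finset.mem_Iic.mp hδ
    have hadd : δ + (β - δ) = β := add_tsub_cancel_of_le hδle
    rw [succ_smul_pi] at hβ
    rcases GLT.trichotomy (β - δ) α with h | h | h
    · exact nsmul_mem (Ideal.mul_mem_left _ _ (mem_gen g h)) _
    · have hx := hadd
      rw [h] at hx
      have h1 : GradedLexLT (δ + α) (ε • α + α) := by rw [hx]; exact hβ
      exact nsmul_mem (Ideal.mul_mem_right _ _ (ih δ (GLT.of_add_right h1))) _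
    · have h1 : GradedLexLT (δ + α) β := hadd ▸ GLT.add_left h δ
      have h2 : GradedLexLT (δ + α) (ε • α + α) := GLT.trans h1 hβ
      exact nsmul_mem (Ideal.mul_mem_right _ _ (ih δ (GLT.of_add_right h2))) _
end DPR

/-- In the differential polynomial ring, for `g ∈ ℂ{y}`, `ε ≥ 1` and `α ∈ ℕ₀^m`, there
exist a positive integer `c` and an element `G` of the ideal generated by the partial
derivatives `∂^{|β|}g/∂x^β` with `β ≺ α` (graded lex) such that
`∂^{ε|α|}(g^ε)/∂x^{εα} = c · (∂^{|α|}g/∂x^α)^ε + G`. -/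
theorem deriv_pow_eq_pow_deriv_add {n m : ℕ} (g : DiffPolyRing n m) (ε : ℕ) (hε : 0 < ε)
    (α : Fin m → ℕ) :
    ∃ c : ℕ, 0 < c ∧
      ∃ G ∈ Ideal.span {h : DiffPolyRing n m | ∃ β, GradedLexLT β α ∧ h = derXpow β g},
        derXpow (ε • α) (g ^ ε) = (c : DiffPolyRing n m) * (derXpow α g) ^ ε + G := by
  have hε' : 1 ≤ ε := hε
  clear hε
  induction ε, hε' using Nat.le_induction with
  | base =>
    refine ⟨1, one_pos, 0, Ideal.zero_mem _, ?_⟩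
    simp [one_smul, pow_one]
  | succ ε hε ih =>
    obtain ⟨c, hc, G, hG, hEq⟩ := ih
    set P := derXpow α g with hP
    set C := ∏ j, (((ε + 1) • α : Fin m → ℕ) j).choose ((ε • α : Fin m → ℕ) j) with hC
    have hCpos : 0 < C := by
      apply Finset.prod_pos
      intro j _
      apply Nat.choose_pos
      simp only [Pi.smul_apply, smul_eq_mul]
      exact Nat.mul_le_mul_right _ (Nat.le_succ ε)
    have hmem : (ε • α : Fin m → ℕ) ∈ Finset.Iic ((ε + 1) • α : Fin m → ℕ) := by
      rw [Finset.mem_Iic]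
      intro l
      simp only [Pi.smul_apply, smul_eq_mul]
      exact Nat.mul_le_mul_right _ (Nat.le_succ ε)
    have hsub : ((ε + 1) • α : Fin m → ℕ) - ε • α = α := by
      funext l
      simp only [Pi.sub_apply, Pi.smul_apply, smul_eq_mul, Nat.succ_mul]
      omega
    have hrest : ∑ δ ∈ (Finset.Iic ((ε + 1) • α : Fin m → ℕ)).erase (ε • α),
        (∏ j, (((ε + 1) • α : Fin m → ℕ) j).choose (δ j)) •
          (derXpow δ (g ^ ε) * derXpow ((ε + 1) • α - δ) g) ∈ DPR.I g α := by
      apply Ideal.sum_mem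
      intro δ hδ
      obtain ⟨hne, hδle'⟩ := Finset.mem_erase.mp hδ
      have hδle : δ ≤ (ε + 1) • α := Finset.mem_Iic.mp hδle'
      have hadd : δ + ((ε + 1) • α - δ) = (ε + 1) • α := add_tsub_cancel_of_le hδle
      rcases GLT.trichotomy ((ε + 1) • α - δ) α with h | h | h
      · exact nsmul_mem (Ideal.mul_mem_left _ _ (DPR.mem_gen g h)) _
      · exfalso
        apply hne
        have hx := hadd
        rw [h] at hx
        rw [DPR.succ_smul_pi] at hx
        exact add_right_cancel hx
      · have h1 : GradedLexLT (δ + α) ((ε + 1) • α) := by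
          have := GLT.add_left h δ
          rw [hadd] at this
          exact this
        rw [DPR.succ_smul_pi] at h1
        exact nsmul_mem
          (Ideal.mul_mem_right _ _ (DPR.mem_I_of_lt g α ε hε δ (GLT.of_add_right h1))) _
    refine ⟨C * c, Nat.mul_pos hCpos hc, C • (G * P) + _, Ideal.add_mem _
      (nsmul_mem (Ideal.mul_mem_right _ _ hG) C) hrest, ?_⟩
    rw [pow_succ, DPR.derXpow_mul, ← Finset.add_sum_erase _ _ hmem, hsub, hEq]
    have hkey : C • (((c : DiffPolyRing n m) * P ^ ε + G) * P)
        = ((C * c : ℕ) : DiffPolyRing n m) * P ^ (ε + 1) + C • (G * P) := by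
      rw [nsmul_eq_mul, nsmul_eq_mul, pow_succ]
      push_cast
      ring
    rw [hkey, add_assoc]
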